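/- For every n ≥ 2, consider n agents and 2n chores c_1, …, c_{2n} arriving one per round, where agent 1 values each of c_1, …, c_n at −1.1 and each of c_{n+1}, …, c_{2n} at −2; agent 2 values each of c_1, …, c_n at −2 and each of c_{n+1}, …, c_{2n} at −1.1; and any agent i ≥ 3 values all chores at −2. Then in any TEF1 allocation each agent receives exactly one chore from {c_1, …, c_n} and exactly one from {c_{n+1}, …, c_{2n}}, and every such allocation is Pareto-dominated. Hence no allocation for this instance is both TEF1 and Pareto-optimal. -/
import Mathlib


open Finset

def bundle {n m : ℕ} (A : Fin m → Fin n) (S : Finset (Fin m)) (i : Fin n) : Finset (Fin m) :=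
  S.filter (fun j => A j = i)

def bval {m : ℕ} (v : Fin m → ℝ) (B : Finset (Fin m)) : ℝ := ∑ j ∈ B, v j

def EF1chores {n m : ℕ} (v : Fin n → Fin m → ℝ) (A : Fin m → Fin n) (S : Finset (Fin m)) : Prop :=
  ∀ i j : Fin n, bundle A S i = ∅ ∨
    ∃ c ∈ bundle A S i, bval (v i) ((bundle A S i).erase c) ≥ bval (v i) (bundle A S j)

def TEF1chores {n m : ℕ} (v : Fin n → Fin m → ℝ) (A : Fin m → Fin n) : Prop :=
  ∀ t : Fin m, EF1chores v A (Finset.univ.filter (fun j => j ≤ t))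

def finalVal {n m : ℕ} (v : Fin n → Fin m → ℝ) (A : Fin m → Fin n) (i : Fin n) : ℝ :=
  bval (v i) (bundle A Finset.univ i)

def ParetoDominates {n m : ℕ} (v : Fin n → Fin m → ℝ) (A' A : Fin m → Fin n) : Prop :=
  (∀ i, finalVal v A' i ≥ finalVal v A i) ∧ ∃ i, finalVal v A' i > finalVal v A i

def ParetoOptimal {n m : ℕ} (v : Fin n → Fin m → ℝ) (A : Fin m → Fin n) : Prop :=
  ¬ ∃ A' : Fin m → Fin n, ParetoDominates v A' A

/-- The chores instance: agent 1 values the first `n` chores at −1.1 and the rest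
at −2, agent 2 the reverse, and everyone else values everything at −2. -/
def v10 (n : ℕ) (i : Fin n) (j : Fin (2 * n)) : ℝ :=
  if i.val = 0 then (if j.val < n then -1.1 else -2)
  else if i.val = 1 then (if j.val < n then -2 else -1.1)
  else -2

set_option maxHeartbeats 1000000


lemma v10_cases (n : ℕ) (i : Fin n) (j : Fin (2 * n)) :
    v10 n i j = -1.1 ∨ v10 n i j = -2 := by
  unfold v10; split_ifs <;> norm_num

lemma v10_le (n : ℕ) (i : Fin n) (j : Fin (2 * n)) : v10 n i j ≤ -1.1 := by
  rcases v10_cases n i j with h | h <;> rw [h] <;> norm_num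

lemma v10_ge (n : ℕ) (i : Fin n) (j : Fin (2 * n)) : -2 ≤ v10 n i j := by
  rcases v10_cases n i j with h | h <;> rw [h] <;> norm_num

lemma bval_le {m : ℕ} (v : Fin m → ℝ) (B : Finset (Fin m)) (h : ∀ j ∈ B, v j ≤ -1.1) :
    bval v B ≤ -1.1 * B.card := by
  unfold bval
  calc ∑ j ∈ B, v j ≤ ∑ _j ∈ B, (-1.1 : ℝ) := Finset.sum_le_sum h
    _ = -1.1 * B.card := by rw [Finset.sum_const, nsmul_eq_mul, mul_comm]

lemma bval_ge {m : ℕ} (v : Fin m → ℝ) (B : Finset (Fin m)) (h : ∀ j ∈ B, -2 ≤ v j) :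
    -2 * B.card ≤ bval v B := by
  unfold bval
  calc (-2 : ℝ) * B.card = ∑ _j ∈ B, (-2 : ℝ) := by rw [Finset.sum_const, nsmul_eq_mul, mul_comm]
    _ ≤ ∑ j ∈ B, v j := Finset.sum_le_sum h

lemma bval_const {m : ℕ} (v : Fin m → ℝ) (B : Finset (Fin m)) (c : ℝ)
    (h : ∀ j ∈ B, v j = c) : bval v B = c * B.card := by
  unfold bval
  rw [Finset.sum_congr rfl h, Finset.sum_const, nsmul_eq_mul, mul_comm]

lemma sum_bundle_card {n m : ℕ} (A : Fin m → Fin n) (S : Finset (Fin m)) :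
    ∑ i, (bundle A S i).card = S.card :=
  (Finset.card_eq_sum_card_fiberwise (fun x _ => Finset.mem_univ (A x))).symm

lemma pigeon {k : ℕ} (g : Fin k → ℕ) (hsum : ∑ i, g i = k) {i₀ : Fin k} (h2 : 2 ≤ g i₀) :
    ∃ j, g j = 0 := by
  by_contra h0
  push_neg at h0
  have h1 : ∀ j, 1 ≤ g j := fun j => Nat.one_le_iff_ne_zero.mpr (h0 j)
  have hs : (univ.erase i₀).card • 1 ≤ ∑ j ∈ univ.erase i₀, g j :=
    Finset.card_nsmul_le_sum _ _ _ (fun j _ => h1 j)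
  have hc : (univ.erase i₀).card = k - 1 := by
    rw [Finset.card_erase_of_mem (mem_univ i₀), Finset.card_univ, Fintype.card_fin]
  rw [hc, smul_eq_mul, mul_one] at hs
  rw [← Finset.add_sum_erase _ g (mem_univ i₀)] at hsum
  have hk : 0 < k := i₀.pos
  omega

lemma all_one {k : ℕ} (g : Fin k → ℕ) (hsum : ∑ i, g i = k) (hle : ∀ i, g i ≤ 1) :
    ∀ i, g i = 1 := by
  intro i
  by_contra hne
  have hgi : g i = 0 := by have := hle i; omega
  have hs : ∑ j ∈ univ.erase i, g j ≤ (univ.erase i).card • 1 :=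
    Finset.sum_le_card_nsmul _ _ _ (fun j _ => hle j)
  have hc : (univ.erase i).card = k - 1 := by
    rw [Finset.card_erase_of_mem (mem_univ i), Finset.card_univ, Fintype.card_fin]
  rw [hc, smul_eq_mul, mul_one] at hs
  rw [← Finset.add_sum_erase _ g (mem_univ i)] at hsum
  have hk : 0 < k := i.pos
  omega

lemma v10_01 {n : ℕ} {i : Fin n} {j : Fin (2 * n)} (h : i.val = 0) (hj : j.val < n) :
    v10 n i j = -1.1 := by simp [v10, h, hj]

lemma v10_02 {n : ℕ} {i : Fin n} {j : Fin (2 * n)} (h : i.val = 0) (hj : ¬ j.val < n) :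
    v10 n i j = -2 := by simp [v10, h, hj]

lemma v10_11 {n : ℕ} {i : Fin n} {j : Fin (2 * n)} (h : i.val = 1) (hj : j.val < n) :
    v10 n i j = -2 := by simp [v10, h, hj]

lemma v10_12 {n : ℕ} {i : Fin n} {j : Fin (2 * n)} (h : i.val = 1) (hj : ¬ j.val < n) :
    v10 n i j = -1.1 := by simp [v10, h, hj]

lemma key (n : ℕ) (hn : 2 ≤ n) (A : Fin (2 * n) → Fin n) (h : TEF1chores (v10 n) A) :
    ∀ i : Fin n,
      ((bundle A Finset.univ i).filter (fun j => j.val < n)).card = 1 ∧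
      ((bundle A Finset.univ i).filter (fun j => n ≤ j.val)).card = 1 := by
  have hn2 : 0 < 2 * n := by omega
  set t1 : Fin (2 * n) := ⟨n - 1, by omega⟩ with ht1
  set P : Finset (Fin (2 * n)) := univ.filter (fun j => j ≤ t1) with hP
  have hPdesc : ∀ j : Fin (2 * n), j ∈ P ↔ j.val < n := by
    intro j
    simp only [hP, mem_filter, mem_univ, true_and, Fin.le_def, ht1]
    omega
  have hPcard : P.card = n := by
    have hmap : P = Finset.map (Fin.castLEEmb (by omega : n ≤ 2 * n)) univ := by
      ext j
      simp only [hPdesc j, Finset.mem_map, Finset.mem_univ, true_and]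
      constructor
      · intro hj
        exact ⟨⟨j.val, hj⟩, by simp [Fin.castLEEmb, Fin.ext_iff]⟩
      · rintro ⟨a, rfl⟩
        simpa [Fin.castLEEmb] using a.isLt
    rw [hmap, Finset.card_map, Finset.card_univ, Fintype.card_fin]
  have hFP : ∀ i, (bundle A univ i).filter (fun j => j.val < n) = bundle A P i := by
    intro i; ext j
    simp only [bundle, Finset.mem_filter, Finset.mem_univ, true_and]
    rw [show (j ∈ P) = (j.val < n) from propext (hPdesc j)]
    tauto
  -- step 1: each bundle among first n chores has card ≤ 1
  have hb1 : ∀ i, (bundle A P i).card ≤ 1 := by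
    intro i
    by_contra hc
    push_neg at hc
    obtain ⟨j, hj0⟩ := pigeon (fun i => (bundle A P i).card)
      (by rw [sum_bundle_card A P, hPcard]) hc
    have hjE : bundle A P j = ∅ := Finset.card_eq_zero.mp hj0
    rcases h t1 i j with hE | ⟨c, hc1, hc2⟩
    · have hE' : bundle A P i = ∅ := hE
      rw [hE'] at hc; simp at hc
    · have hc1' : c ∈ bundle A P i := hc1
      have hc2' : bval (v10 n i) ((bundle A P i).erase c) ≥ bval (v10 n i) (bundle A P j) := hc2
      clear hc1 hc2
      rename' hc1' => hc1, hc2' => hc2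
      rw [hjE] at hc2
      have h0 : bval (v10 n i) (∅ : Finset (Fin (2 * n))) = 0 := by simp [bval]
      rw [h0] at hc2
      have hcard : 1 ≤ ((bundle A P i).erase c).card := by
        have h5 := Finset.card_erase_of_mem hc1
        omega
      have hle := bval_le (v10 n i) ((bundle A P i).erase c) (fun j' _ => v10_le n i j')
      have hcr : (1 : ℝ) ≤ (((bundle A P i).erase c).card : ℝ) := by exact_mod_cast hcard
      nlinarith
  have hF1 : ∀ i, (bundle A P i).card = 1 :=
    all_one _ (by rw [sum_bundle_card, hPcard]) hb1
  -- final time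
  set t2 : Fin (2 * n) := ⟨2 * n - 1, by omega⟩ with ht2
  have hPl : univ.filter (fun j : Fin (2 * n) => j ≤ t2) = univ := by
    ext j
    simp only [mem_filter, mem_univ, true_and, Fin.le_def, ht2, iff_true]
    omega
  have hfin := h t2
  rw [hPl] at hfin
  have hsplit : ∀ i, (bundle A univ i).card =
      ((bundle A univ i).filter (fun j => j.val < n)).card +
      ((bundle A univ i).filter (fun j => n ≤ j.val)).card := by
    intro i
    rw [← Finset.card_filter_add_card_filter_not (s := bundle A univ i)
      (p := fun j => j.val < n)]
    simp only [not_lt]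
  have hsumF : ∑ i, ((bundle A univ i).filter (fun j => j.val < n)).card = n := by
    rw [Finset.sum_congr rfl (fun i _ => by rw [hFP i, hF1 i])]
    simp
  have hsumS : ∑ i, ((bundle A univ i).filter (fun j => n ≤ j.val)).card = n := by
    have h1 : ∑ i, (bundle A univ i).card = 2 * n := by
      rw [sum_bundle_card, card_univ, Fintype.card_fin]
    have h3 : ∑ i, (bundle A univ i).card =
        ∑ i, ((bundle A univ i).filter (fun j => j.val < n)).card +
        ∑ i, ((bundle A univ i).filter (fun j => n ≤ j.val)).card := by
      rw [← Finset.sum_add_distrib]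
      exact Finset.sum_congr rfl (fun i _ => hsplit i)
    omega
  have hS1 : ∀ i, ((bundle A univ i).filter (fun j => n ≤ j.val)).card ≤ 1 := by
    intro i
    by_contra hc
    push_neg at hc
    obtain ⟨j, hj0⟩ := pigeon _ hsumS hc
    have hbj : (bundle A univ j).card = 1 := by
      rw [hsplit j, hFP j, hF1 j, hj0]
    have hbi : 3 ≤ (bundle A univ i).card := by
      have := hF1 i
      rw [hsplit i, hFP i]
      omega
    rcases hfin i j with hE | ⟨c, hc1, hc2⟩
    · rw [hE] at hbi; simp at hbi
    · have he : 2 ≤ ((bundle A univ i).erase c).card := by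
        rw [Finset.card_erase_of_mem hc1]; omega
      have hle := bval_le (v10 n i) ((bundle A univ i).erase c) (fun j' _ => v10_le n i j')
      have hge := bval_ge (v10 n i) (bundle A univ j) (fun j' _ => v10_ge n i j')
      have h2r : (2 : ℝ) ≤ (((bundle A univ i).erase c).card : ℝ) := by exact_mod_cast he
      have hbjr : ((bundle A univ j).card : ℝ) = 1 := by exact_mod_cast hbj
      rw [hbjr] at hge
      nlinarith
  have hSall := all_one _ hsumS hS1
  exact fun i => ⟨by rw [hFP i]; exact hF1 i, hSall i⟩

lemma pareto (n : ℕ) (hn : 2 ≤ n) (A : Fin (2 * n) → Fin n)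
    (hkey : ∀ i : Fin n,
      ((bundle A Finset.univ i).filter (fun j => j.val < n)).card = 1 ∧
      ((bundle A Finset.univ i).filter (fun j => n ≤ j.val)).card = 1) :
    ∃ A' : Fin (2 * n) → Fin n, ParetoDominates (v10 n) A' A := by
  have h0n : 0 < n := by omega
  set i0 : Fin n := ⟨0, h0n⟩ with hi0
  set i1 : Fin n := ⟨1, by omega⟩ with hi1
  have hne : i0 ≠ i1 := by simp [hi0, hi1, Fin.ext_iff]
  set F : Fin n → Finset (Fin (2 * n)) :=
    fun i => (bundle A Finset.univ i).filter (fun j => j.val < n) with hF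
  set S : Fin n → Finset (Fin (2 * n)) :=
    fun i => (bundle A Finset.univ i).filter (fun j => n ≤ j.val) with hS
  have memF : ∀ (i : Fin n) (j : Fin (2 * n)), j ∈ F i ↔ A j = i ∧ j.val < n := by
    intro i j; simp [hF, bundle]
  have memS : ∀ (i : Fin n) (j : Fin (2 * n)), j ∈ S i ↔ A j = i ∧ n ≤ j.val := by
    intro i j; simp [hS, bundle]
  set A' : Fin (2 * n) → Fin n :=
    fun j => if A j = i0 ∨ A j = i1 then (if j.val < n then i0 else i1) else A j with hA'
  -- decompositions of old bundles
  have hdisj : ∀ i : Fin n, Disjoint (F i) (S i) := by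
    intro i
    rw [Finset.disjoint_left]
    intro a ha hb
    rw [memF] at ha; rw [memS] at hb
    omega
  have hunion : ∀ i : Fin n, F i ∪ S i = bundle A Finset.univ i := by
    intro i
    ext j
    simp only [Finset.mem_union, memF, memS, bundle, mem_filter, mem_univ, true_and]
    constructor
    · rintro (⟨h1, _⟩ | ⟨h1, _⟩) <;> exact h1
    · intro h1
      rcases lt_or_ge j.val n with h2 | h2
      · exact Or.inl ⟨h1, h2⟩
      · exact Or.inr ⟨h1, h2⟩
  have hval : ∀ i : Fin n, finalVal (v10 n) A i = bval (v10 n i) (F i) + bval (v10 n i) (S i) := by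
    intro i
    show bval (v10 n i) (bundle A Finset.univ i) = _
    rw [← hunion i]
    exact Finset.sum_union (hdisj i)
  have hv0 : i0.val = 0 := rfl
  have hv1 : i1.val = 1 := rfl
  -- old values
  have hA0 : finalVal (v10 n) A i0 = -3.1 := by
    rw [hval i0,
      bval_const _ _ (-1.1) (fun j hj => by
        rw [memF] at hj
        exact v10_01 hv0 hj.2),
      bval_const _ _ (-2) (fun j hj => by
        rw [memS] at hj
        exact v10_02 hv0 (by omega)),
      (hkey i0).1, (hkey i0).2]
    norm_num
  have hA1 : finalVal (v10 n) A i1 = -3.1 := by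
    rw [hval i1,
      bval_const _ _ (-2) (fun j hj => by
        rw [memF] at hj
        exact v10_11 hv1 hj.2),
      bval_const _ _ (-1.1) (fun j hj => by
        rw [memS] at hj
        exact v10_12 hv1 (by omega)),
      (hkey i1).1, (hkey i1).2]
    norm_num
  -- new bundles
  have hB0 : bundle A' Finset.univ i0 = F i0 ∪ F i1 := by
    ext j
    simp only [bundle, mem_filter, mem_univ, true_and, Finset.mem_union, memF]
    constructor
    · intro hj
      by_cases h01 : A j = i0 ∨ A j = i1
      · have hj' : (if j.val < n then i0 else i1) = i0 := by
          rw [hA'] at hj; simpa [h01] using hj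
        by_cases hjn : j.val < n
        · rcases h01 with h | h
          · exact Or.inl ⟨h, hjn⟩
          · exact Or.inr ⟨h, hjn⟩
        · rw [if_neg hjn] at hj'
          exact absurd hj'.symm hne
      · have : A j = i0 := by rw [hA'] at hj; simpa [h01] using hj
        exact absurd (Or.inl this) h01
    · rintro (⟨h1, h2⟩ | ⟨h1, h2⟩) <;> simp [hA', h1, h2]
  have hB1 : bundle A' Finset.univ i1 = S i0 ∪ S i1 := by
    ext j
    simp only [bundle, mem_filter, mem_univ, true_and, Finset.mem_union, memS]
    constructor
    · intro hj
      by_cases h01 : A j = i0 ∨ A j = i1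
      · have hj' : (if j.val < n then i0 else i1) = i1 := by
          rw [hA'] at hj; simpa [h01] using hj
        by_cases hjn : j.val < n
        · rw [if_pos hjn] at hj'
          exact absurd hj' hne
        · rcases h01 with h | h
          · exact Or.inl ⟨h, by omega⟩
          · exact Or.inr ⟨h, by omega⟩
      · have h2 : A j = i1 := by rw [hA'] at hj; simpa [h01] using hj
        exact absurd (Or.inr h2) h01
    · rintro (⟨h1, h2⟩ | ⟨h1, h2⟩) <;> simp [hA', h1, h2, Nat.not_lt.mpr h2]
  have hBi : ∀ i : Fin n, i ≠ i0 → i ≠ i1 → bundle A' Finset.univ i = bundle A Finset.univ i := by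
    intro i h0 h1
    ext j
    simp only [bundle, mem_filter, mem_univ, true_and]
    constructor
    · intro hj
      by_cases h01 : A j = i0 ∨ A j = i1
      · exfalso
        by_cases hjn : j.val < n
        · have : i0 = i := by rw [← hj, hA']; simp [h01, hjn]
          exact h0 this.symm
        · have : i1 = i := by rw [← hj, hA']; simp [h01, hjn]
          exact h1 this.symm
      · rwa [show A' j = A j from by rw [hA']; simp [h01]] at hj
    · intro hj
      have h01 : ¬(A j = i0 ∨ A j = i1) := by
        rintro (h | h) <;> rw [hj] at h
        · exact h0 h
        · exact h1 h
      show (if A j = i0 ∨ A j = i1 then if j.val < n then i0 else i1 else A j) = i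
      rw [if_neg h01]; exact hj
  -- disjointness of the two F's / S's
  have hdF : Disjoint (F i0) (F i1) := by
    rw [Finset.disjoint_left]
    intro a ha hb
    rw [memF] at ha hb
    exact hne (ha.1 ▸ hb.1)
  have hdS : Disjoint (S i0) (S i1) := by
    rw [Finset.disjoint_left]
    intro a ha hb
    rw [memS] at ha hb
    exact hne (ha.1 ▸ hb.1)
  -- new values
  have hB0v : finalVal (v10 n) A' i0 = -2.2 := by
    show bval (v10 n i0) (bundle A' Finset.univ i0) = _
    rw [hB0, bval_const _ _ (-1.1) (fun j hj => by
        rcases Finset.mem_union.mp hj with h | h <;> rw [memF] at h <;>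
          exact v10_01 hv0 h.2),
      Finset.card_union_of_disjoint hdF, (hkey i0).1, (hkey i1).1]
    norm_num
  have hB1v : finalVal (v10 n) A' i1 = -2.2 := by
    show bval (v10 n i1) (bundle A' Finset.univ i1) = _
    rw [hB1, bval_const _ _ (-1.1) (fun j hj => by
        rcases Finset.mem_union.mp hj with h | h <;> rw [memS] at h <;>
          exact v10_12 hv1 (by omega)),
      Finset.card_union_of_disjoint hdS, (hkey i0).2, (hkey i1).2]
    norm_num
  refine ⟨A', ⟨?_, ⟨i0, ?_⟩⟩⟩
  · intro i
    by_cases h0 : i = i0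
    · subst h0; rw [hA0, hB0v]; norm_num
    by_cases h1 : i = i1
    · subst h1; rw [hA1, hB1v]; norm_num
    · have : finalVal (v10 n) A' i = finalVal (v10 n) A i := by
        show bval _ _ = bval _ _
        rw [hBi i h0 h1]
      exact ge_of_eq this
  · rw [hA0, hB0v]; norm_num

/-- For n ≥ 2 agents and the 2n chores above arriving one per round: in any TEF1
allocation each agent gets exactly one chore from the first half and one from the
second half, every such allocation is Pareto-dominated, and hence no allocation is
both TEF1 and Pareto-optimal. -/

theorem stmt10 (n : ℕ) (hn : 2 ≤ n) :
    (∀ A : Fin (2 * n) → Fin n, TEF1chores (v10 n) A →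
      (∀ i : Fin n,
          ((bundle A Finset.univ i).filter (fun j => j.val < n)).card = 1 ∧
          ((bundle A Finset.univ i).filter (fun j => n ≤ j.val)).card = 1) ∧
        ∃ A' : Fin (2 * n) → Fin n, ParetoDominates (v10 n) A' A) ∧
    ¬ ∃ A : Fin (2 * n) → Fin n, TEF1chores (v10 n) A ∧ ParetoOptimal (v10 n) A := by
  constructor
  · intro A hA
    exact ⟨key n hn A hA, pareto n hn A (key n hn A hA)⟩
  · rintro ⟨A, hA, hPO⟩
    exact hPO (pareto n hn A (key n hn A hA))
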